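/- Under the continuous extension X* = X + U, Y* = Y + V (with independent continuous perturbations U, V on [0,1], i.i.d. across copies), Spearman's rho is preserved: ρ^S(X*, Y*) = ρ^S(X, Y), where ρ^S(X,Y) = 3(P(C) - P(D)) with P(C) = P((X1-X2)(Y1-Y3) > 0), P(D) = P((X1-X2)(Y1-Y3) < 0) for independent copies (X1,Y1),(X2,Y2),(X3,Y3) of (X,Y). -/

import Mathlib

/-!
Write `A = X₀ - X₁`, `B = Y₀ - Y₂` (integers), `S = U₀ - U₁` and `T = V₀ - V₂`, so that
`|S|, |T| < 1` almost surely and `3 (P(C) - P(D)) = 3 E[sign ((A + S) (B + T))]`. As `A` is an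
integer, `sign (A + S)` is `sign A` unless `A = 0`, where it is `sign S`. Hence
`sign ((A + S) (B + T)) = sign (A B) + [B = 0] sign A · sign T + [A = 0] sign (B + T) · sign S`,
and each correction term has mean zero: it is a function of variables independent of `T`
(resp. `S`) times `sign T` (resp. `sign S`), and `E[sign S] = E[sign T] = 0` because `S` and `T`
are differences of independent identically distributed variables.
-/

open MeasureTheory ProbabilityTheory

namespace Real

lemma sign_mul (x y : ℝ) : sign (x * y) = sign x * sign y := by
  rcases lt_trichotomy x 0 with hx | rfl | hx <;> rcases lt_trichotomy y 0 with hy | rfl | hy <;>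
    simp [sign_zero, sign_of_neg, sign_of_pos, mul_pos_of_neg_of_neg, mul_neg_of_neg_of_pos,
      mul_neg_of_pos_of_neg, *]

lemma abs_sign_le_one (x : ℝ) : |sign x| ≤ 1 := by
  rcases sign_apply_eq x with h | h | h <;> simp [h]

@[fun_prop]
lemma measurable_sign : Measurable sign :=
  measurable_const.ite measurableSet_Iio (measurable_const.ite measurableSet_Ioi measurable_const)

lemma sign_intCast_add (a : ℤ) {s : ℝ} (hs : |s| < 1) :
    sign (a + s) = sign a + if a = 0 then sign s else 0 := by
  obtain ⟨hs₁, hs₂⟩ := abs_lt.mp hs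
  rcases lt_trichotomy a 0 with ha | rfl | ha
  · have : (a : ℝ) ≤ -1 := by exact_mod_cast Int.le_sub_one_of_lt ha
    rw [if_neg ha.ne, sign_of_neg (by linarith), sign_of_neg (by exact_mod_cast ha), add_zero]
  · simp [sign_zero]
  · have : (1 : ℝ) ≤ a := by exact_mod_cast ha
    rw [if_neg ha.ne', sign_of_pos (by linarith), sign_of_pos (by exact_mod_cast ha), add_zero]

end Real

section

variable {Ω : Type*} [MeasurableSpace Ω] {μ : Measure Ω}

lemma toReal_measure_pos_sub_toReal_measure_neg [IsFiniteMeasure μ] {Z : Ω → ℝ}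
    (hZ : Measurable Z) :
    (μ {ω | 0 < Z ω}).toReal - (μ {ω | Z ω < 0}).toReal = ∫ ω, Real.sign (Z ω) ∂μ := by
  have hpos : MeasurableSet {ω | 0 < Z ω} := measurableSet_lt measurable_const hZ
  have hneg : MeasurableSet {ω | Z ω < 0} := measurableSet_lt hZ measurable_const
  have hsign : (fun ω => Real.sign (Z ω))
      = fun ω => {ω | 0 < Z ω}.indicator 1 ω - {ω | Z ω < 0}.indicator 1 ω := by
    ext ω
    rcases lt_trichotomy (Z ω) 0 with h | h | h <;>
      simp [Set.indicator, Real.sign_of_neg, Real.sign_of_pos, Real.sign_zero, h, h.not_gt]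
  rw [hsign,
    integral_sub ((integrable_const 1).indicator hpos) ((integrable_const 1).indicator hneg),
    integral_indicator_one hpos, integral_indicator_one hneg, measureReal_def, measureReal_def]

lemma integral_sign_sub_eq_zero [IsFiniteMeasure μ] {X Y : Ω → ℝ} (hXY : IndepFun X Y μ)
    (hid : IdentDistrib X Y μ μ) : ∫ ω, Real.sign (X ω - Y ω) ∂μ = 0 := by
  have hswap : IdentDistrib (fun ω => (X ω, Y ω)) (fun ω => (Y ω, X ω)) μ μ :=
    hid.prodMk hid.symm hXY hXY.symm
  have h := (hswap.comp (u := fun p => Real.sign (p.1 - p.2)) (by fun_prop)).integral_eq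
  simp only [Function.comp_def, ← neg_sub (X _), Real.sign_neg, integral_neg] at h
  linarith

lemma ae_abs_sub_lt_one {U U' : Ω → ℝ} (hU : ∀ᵐ ω ∂μ, U ω ∈ Set.Icc (0 : ℝ) 1)
    (hU' : ∀ᵐ ω ∂μ, U' ω ∈ Set.Icc (0 : ℝ) 1) (h₀ : μ (U ⁻¹' {0}) = 0)
    (h₁ : μ (U ⁻¹' {1}) = 0) :
    ∀ᵐ ω ∂μ, |U ω - U' ω| < 1 := by
  filter_upwards [hU, hU', measure_eq_zero_iff_ae_notMem.mp h₀,
    measure_eq_zero_iff_ae_notMem.mp h₁] with ω ⟨hU0, hU1⟩ ⟨hU'0, hU'1⟩ hne₀ hne₁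
  have : 0 < U ω := lt_of_le_of_ne hU0 (Ne.symm hne₀)
  have : U ω < 1 := lt_of_le_of_ne hU1 hne₁
  rw [abs_sub_lt_iff]
  constructor <;> linarith

lemma integral_mul_sign_eq_zero {𝓧 : Type*} [MeasurableSpace 𝓧] {W : Ω → 𝓧} {S : Ω → ℝ}
    {f : 𝓧 → ℝ} (hW : Measurable W) (hS : Measurable S) (hf : Measurable f)
    (hWS : IndepFun W S μ) (hS₀ : ∫ ω, Real.sign (S ω) ∂μ = 0) :
    ∫ ω, f (W ω) * Real.sign (S ω) ∂μ = 0 := by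
  rw [hWS.integral_fun_comp_mul_comp hW.aemeasurable hS.aemeasurable hf.aestronglyMeasurable
    Real.measurable_sign.aestronglyMeasurable, hS₀, mul_zero]

lemma integral_sign_mul_intCast_add [IsFiniteMeasure μ] {A B : Ω → ℤ} {S T : Ω → ℝ}
    (hA : Measurable A) (hB : Measurable B) (hS : Measurable S) (hT : Measurable T)
    (hS_indep : IndepFun (fun ω => (A ω, B ω, T ω)) S μ)
    (hT_indep : IndepFun (fun ω => (A ω, B ω)) T μ)
    (hS₀ : ∫ ω, Real.sign (S ω) ∂μ = 0) (hT₀ : ∫ ω, Real.sign (T ω) ∂μ = 0)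
    (hS₁ : ∀ᵐ ω ∂μ, |S ω| < 1) (hT₁ : ∀ᵐ ω ∂μ, |T ω| < 1) :
    ∫ ω, Real.sign (((A ω : ℝ) + S ω) * ((B ω : ℝ) + T ω)) ∂μ
      = ∫ ω, Real.sign ((A ω : ℝ) * (B ω : ℝ)) ∂μ := by
  let φ : ℤ × ℤ → ℝ := fun p => if p.2 = 0 then Real.sign p.1 else 0
  let ψ : ℤ × ℤ × ℝ → ℝ := fun p => if p.1 = 0 then Real.sign (p.2.1 + p.2.2) else 0
  have h_expand : (fun ω => Real.sign (((A ω : ℝ) + S ω) * ((B ω : ℝ) + T ω))) =ᵐ[μ]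
      fun ω => Real.sign ((A ω : ℝ) * (B ω : ℝ)) + φ (A ω, B ω) * Real.sign (T ω)
        + ψ (A ω, B ω, T ω) * Real.sign (S ω) := by
    filter_upwards [hS₁, hT₁] with ω hSω hTω
    simp only [φ, ψ, Real.sign_mul, Real.sign_intCast_add _ hSω, Real.sign_intCast_add _ hTω]
    split_ifs <;> ring
  have hφ : Measurable φ := measurable_of_countable φ
  have hψ : Measurable ψ :=
    Measurable.ite (measurable_fst (measurableSet_singleton 0)) (by fun_prop) measurable_const
  have hφ₁ : ∀ p, |φ p| ≤ 1 := fun p => by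
    unfold φ; split_ifs <;> simp [Real.abs_sign_le_one]
  have hψ₁ : ∀ p, |ψ p| ≤ 1 := fun p => by
    unfold ψ; split_ifs <;> simp [Real.abs_sign_le_one]
  have h_integrable : ∀ {f : Ω → ℝ}, Measurable f → (∀ ω, |f ω| ≤ 1) → Integrable f μ :=
    fun hf hf₁ => .of_bound hf.aestronglyMeasurable 1 (ae_of_all _ hf₁)
  have h_mul_le : ∀ {x y : ℝ}, |x| ≤ 1 → |y| ≤ 1 → |x * y| ≤ 1 := fun hx hy => by
    rw [abs_mul]; exact mul_le_one₀ hx (abs_nonneg _) hy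
  have h_int₁ : Integrable (fun ω => Real.sign ((A ω : ℝ) * (B ω : ℝ))) μ :=
    h_integrable (by fun_prop) fun ω => Real.abs_sign_le_one _
  have h_int₂ : Integrable (fun ω => φ (A ω, B ω) * Real.sign (T ω)) μ :=
    h_integrable (by fun_prop) fun ω => h_mul_le (hφ₁ _) (Real.abs_sign_le_one _)
  have h_int₃ : Integrable (fun ω => ψ (A ω, B ω, T ω) * Real.sign (S ω)) μ :=
    h_integrable (by fun_prop) fun ω => h_mul_le (hψ₁ _) (Real.abs_sign_le_one _)
  rw [integral_congr_ae h_expand, integral_add (by exact h_int₁.add h_int₂) h_int₃,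
    integral_add h_int₁ h_int₂,
    integral_mul_sign_eq_zero (by fun_prop) hT hφ hT_indep hT₀,
    integral_mul_sign_eq_zero (by fun_prop) hS hψ hS_indep hS₀, add_zero, add_zero]

end

theorem stmt4 {Ω : Type*} [MeasureSpace Ω] [IsProbabilityMeasure (ℙ : Measure Ω)]
    (X Y : Fin 3 → Ω → ℤ) (U V : Fin 3 → Ω → ℝ)
    (hXm : ∀ i, Measurable (X i)) (hYm : ∀ i, Measurable (Y i))
    (hUm : ∀ i, Measurable (U i)) (hVm : ∀ i, Measurable (V i))
    -- the U i (resp. V i) are identically distributed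
    (hUid : ∀ i, IdentDistrib (U i) (U 0) ℙ ℙ)
    (hVid : ∀ i, IdentDistrib (V i) (V 0) ℙ ℙ)
    -- the U i and V i are continuous random variables taking values in [0,1]
    (hU01 : ∀ i, ∀ᵐ ω ∂ℙ, U i ω ∈ Set.Icc (0 : ℝ) 1)
    (hV01 : ∀ i, ∀ᵐ ω ∂ℙ, V i ω ∈ Set.Icc (0 : ℝ) 1)
    (hUcont : ∀ x : ℝ, ℙ (U 0 ⁻¹' {x}) = 0)
    (hVcont : ∀ x : ℝ, ℙ (V 0 ⁻¹' {x}) = 0)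
    -- joint independence of the three pairs (X i, Y i), the three U i and the three V i
    (hindep :
      iIndepFun
        (β := fun i : Fin 3 ⊕ (Fin 3 ⊕ Fin 3) =>
          match i with
          | .inl _ => ℤ × ℤ
          | .inr _ => ℝ)
        (m := fun i =>
          match i with
          | .inl _ => inferInstanceAs (MeasurableSpace (ℤ × ℤ))
          | .inr _ => inferInstanceAs (MeasurableSpace ℝ))
        (fun i =>
          match i with
          | .inl j => fun ω => (X j ω, Y j ω)
          | .inr (.inl j) => U j
          | .inr (.inr j) => V j) ℙ) :
    -- Spearman's rho is preserved by continuous extension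
    3 * ((ℙ {ω | (((X 0 ω : ℝ) + U 0 ω) - ((X 1 ω : ℝ) + U 1 ω)) *
                   (((Y 0 ω : ℝ) + V 0 ω) - ((Y 2 ω : ℝ) + V 2 ω)) > 0}).toReal
         - (ℙ {ω | (((X 0 ω : ℝ) + U 0 ω) - ((X 1 ω : ℝ) + U 1 ω)) *
                   (((Y 0 ω : ℝ) + V 0 ω) - ((Y 2 ω : ℝ) + V 2 ω)) < 0}).toReal)
      = 3 * ((ℙ {ω | ((X 0 ω : ℝ) - (X 1 ω : ℝ)) * ((Y 0 ω : ℝ) - (Y 2 ω : ℝ)) > 0}).toReal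
             - (ℙ {ω | ((X 0 ω : ℝ) - (X 1 ω : ℝ)) * ((Y 0 ω : ℝ) - (Y 2 ω : ℝ)) < 0}).toReal) := by
  set A : Ω → ℤ := fun ω => X 0 ω - X 1 ω
  set B : Ω → ℤ := fun ω => Y 0 ω - Y 2 ω
  set S : Ω → ℝ := fun ω => U 0 ω - U 1 ω
  set T : Ω → ℝ := fun ω => V 0 ω - V 2 ω
  have h_blocks := fun I J (hIJ : Disjoint I J) => hindep.indepFun_finset I J hIJ (by
    rintro (j | j | j)
    exacts [(hXm j).prodMk (hYm j), hUm j, hVm j])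
  have hS_indep : IndepFun (fun ω => (A ω, B ω, T ω)) S ℙ := by
    refine ((h_blocks {.inl 0, .inl 1, .inl 2, .inr (.inr 0), .inr (.inr 2)}
      {.inr (.inl 0), .inr (.inl 1)} (by decide)).comp
      (φ := fun g => ((g ⟨.inl 0, by decide⟩).1 - (g ⟨.inl 1, by decide⟩).1,
        (g ⟨.inl 0, by decide⟩).2 - (g ⟨.inl 2, by decide⟩).2,
        g ⟨.inr (.inr 0), by decide⟩ - g ⟨.inr (.inr 2), by decide⟩))
      (ψ := fun g => g ⟨.inr (.inl 0), by decide⟩ - g ⟨.inr (.inl 1), by decide⟩)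
      ?_ ?_) <;> fun_prop
  have hT_indep : IndepFun (fun ω => (A ω, B ω)) T ℙ := by
    refine ((h_blocks {.inl 0, .inl 1, .inl 2} {.inr (.inr 0), .inr (.inr 2)} (by decide)).comp
      (φ := fun g => ((g ⟨.inl 0, by decide⟩).1 - (g ⟨.inl 1, by decide⟩).1,
        (g ⟨.inl 0, by decide⟩).2 - (g ⟨.inl 2, by decide⟩).2))
      (ψ := fun g => g ⟨.inr (.inr 0), by decide⟩ - g ⟨.inr (.inr 2), by decide⟩)
      ?_ ?_) <;> fun_prop
  have hS₀ : ∫ ω, Real.sign (S ω) = 0 := integral_sign_sub_eq_zero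
    (hindep.indepFun (i := .inr (.inl 0)) (j := .inr (.inl 1)) (by decide)) (hUid 1).symm
  have hT₀ : ∫ ω, Real.sign (T ω) = 0 := integral_sign_sub_eq_zero
    (hindep.indepFun (i := .inr (.inr 0)) (j := .inr (.inr 2)) (by decide)) (hVid 2).symm
  have hmain := integral_sign_mul_intCast_add
    (by fun_prop) (by fun_prop) (by fun_prop) (by fun_prop) hS_indep hT_indep hS₀ hT₀
    (ae_abs_sub_lt_one (hU01 0) (hU01 1) (hUcont 0) (hUcont 1))
    (ae_abs_sub_lt_one (hV01 0) (hV01 2) (hVcont 0) (hVcont 1))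
  simp only [gt_iff_lt]
  rw [toReal_measure_pos_sub_toReal_measure_neg, toReal_measure_pos_sub_toReal_measure_neg]
  · convert congrArg (3 * ·) hmain using 5 <;> simp only [A, B, S, T] <;> push_cast <;> ring
  all_goals fun_prop
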